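/- The fat topology on M^d is admissible: each basic set F(a,r) is a bounded nc domain. Moreover the fat topology is finer than the free topology and coarser than the fine topology: for every J×J matrix δ of free polynomials and every x ∈ G_δ there exists ε > 0 with F(x,ε) ⊆ G_δ, and every fat open set is fine open. -/

import Mathlib

open Matrix Filter Topology
open scoped Matrix.Norms.L2Operator Kronecker

noncomputable section

/-- `n × n` complex matrices, with the `L²` operator norm. -/
abbrev Mat (n : ℕ) : Type := Matrix (Fin n) (Fin n) ℂ

/-- `d`-tuples of `n × n` complex matrices, normed by the max of the operator norms. -/
abbrev MatTup (d n : ℕ) : Type := Fin d → Mat n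

/-- `M^d`, the disjoint union over all `n` of the `d`-tuples of `n × n` matrices. -/
abbrev MSpace (d : ℕ) : Type := Σ n : ℕ, MatTup d n

/-- Free (noncommutative) polynomials in `d` variables over `ℂ`. -/
abbrev FreePoly (d : ℕ) : Type := FreeAlgebra ℂ (Fin d)

/-- Evaluation of a free polynomial at a `d`-tuple of matrices. -/
def polyEval {d n : ℕ} (p : FreePoly d) (x : MatTup d n) : Mat n :=
  FreeAlgebra.lift ℂ (fun i => x i) p

/-- The (Fréchet) derivative of the evaluation of a free polynomial, `Dp(a)[h]`. -/
def polyDeriv {d n : ℕ} (p : FreePoly d) (a h : MatTup d n) : Mat n :=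
  fderiv ℂ (fun x : MatTup d n => polyEval p x) a h

/-- Assemble a `2 × 2` block matrix.  -/
def blk {n m : ℕ} (A : Matrix (Fin n) (Fin n) ℂ) (B : Matrix (Fin n) (Fin m) ℂ)
    (C : Matrix (Fin m) (Fin n) ℂ) (D : Matrix (Fin m) (Fin m) ℂ) : Mat (n + m) :=
  Matrix.reindex finSumFinEquiv finSumFinEquiv (Matrix.fromBlocks A B C D)

/-- Coordinatewise direct sum of tuples of matrices. -/
def dSum {d n m : ℕ} (x : MatTup d n) (y : MatTup d m) : MatTup d (n + m) :=
  fun r => blk (x r) 0 0 (y r)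

/-- Coordinatewise conjugation `s⁻¹ x s`. -/
def simConj {d n : ℕ} (s : Mat n) (x : MatTup d n) : MatTup d n :=
  fun r => s⁻¹ * x r * s

/-- An nc domain: a d.u. open subset of `M^d` closed under direct sums and unitary
conjugations. -/
structure IsNCDomain {d : ℕ} (Ω : Set (MSpace d)) : Prop where
  duOpen : ∀ n : ℕ, IsOpen {x : MatTup d n | (⟨n, x⟩ : MSpace d) ∈ Ω}
  dsum_mem : ∀ {n m : ℕ} (x : MatTup d n) (y : MatTup d m),
    (⟨n, x⟩ : MSpace d) ∈ Ω → (⟨m, y⟩ : MSpace d) ∈ Ω →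
    (⟨n + m, dSum x y⟩ : MSpace d) ∈ Ω
  unitary_mem : ∀ {n : ℕ} (u : Matrix.unitaryGroup (Fin n) ℂ) (x : MatTup d n),
    (⟨n, x⟩ : MSpace d) ∈ Ω → (⟨n, simConj (u : Mat n) x⟩ : MSpace d) ∈ Ω

/-- A d.u. open subset of `M^d`: each slice is open. -/
def DUOpen {d : ℕ} (U : Set (MSpace d)) : Prop :=
  ∀ n : ℕ, IsOpen {x : MatTup d n | (⟨n, x⟩ : MSpace d) ∈ U}

/-- An nc function on `Ω`: a graded function respecting direct sums and similarities. -/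
structure IsNCFunctionOn {d : ℕ} (Ω : Set (MSpace d)) (f : ∀ n, MatTup d n → Mat n) : Prop where
  dsum_eq : ∀ {n m : ℕ} (x : MatTup d n) (y : MatTup d m),
    (⟨n, x⟩ : MSpace d) ∈ Ω → (⟨m, y⟩ : MSpace d) ∈ Ω →
    (⟨n + m, dSum x y⟩ : MSpace d) ∈ Ω →
    f (n + m) (dSum x y) = blk (f n x) 0 0 (f m y)
  sim_eq : ∀ {n : ℕ} (s : Mat n) (x : MatTup d n), IsUnit s →
    (⟨n, x⟩ : MSpace d) ∈ Ω → (⟨n, simConj s x⟩ : MSpace d) ∈ Ω →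
    f n (simConj s x) = s⁻¹ * f n x * s

/-- A fine open set: a union of nc domains. -/
def FineOpen {d : ℕ} (U : Set (MSpace d)) : Prop :=
  ∀ x ∈ U, ∃ Ω : Set (MSpace d), IsNCDomain Ω ∧ x ∈ Ω ∧ Ω ⊆ U

/-- A fine holomorphic function: an nc function on a fine open set, locally bounded in
the fine topology. -/
def IsFineHolo {d : ℕ} (U : Set (MSpace d)) (f : ∀ n, MatTup d n → Mat n) : Prop :=
  FineOpen U ∧ IsNCFunctionOn U f ∧
    ∀ a ∈ U, ∃ Ω : Set (MSpace d), IsNCDomain Ω ∧ a ∈ Ω ∧ Ω ⊆ U ∧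
      ∃ C : ℝ, ∀ x ∈ Ω, ‖f x.1 x.2‖ ≤ C

/-- `a^{(k)}`, the direct sum of `k` copies of `a`. -/
def ampTup {d n : ℕ} (k : ℕ) (a : MatTup d n) : MatTup d (k * n) :=
  fun r => Matrix.reindex finProdFinEquiv finProdFinEquiv
    ((1 : Matrix (Fin k) (Fin k) ℂ) ⊗ₖ a r)

/-- The basic fat neighborhood `F(a,r)`: all unitary conjugates of points within `r`
of some `a^{(k)}`. -/
def FBall {d : ℕ} (a : MSpace d) (r : ℝ) : Set (MSpace d) :=
  {y | ∃ k : ℕ, 1 ≤ k ∧ ∃ x : MatTup d (k * a.1), ‖x - ampTup k a.2‖ < r ∧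
    ∃ u : Matrix.unitaryGroup (Fin (k * a.1)) ℂ,
      y = ⟨k * a.1, simConj (u : Mat (k * a.1)) x⟩}

/-- A fat open set. -/
def FatOpen {d : ℕ} (U : Set (MSpace d)) : Prop :=
  ∀ y ∈ U, ∃ ε : ℝ, 0 < ε ∧ FBall y ε ⊆ U

/-- A fat holomorphic function: an nc function on a fat open set, locally bounded in the
fat topology. -/
def IsFatHolo {d : ℕ} (U : Set (MSpace d)) (f : ∀ n, MatTup d n → Mat n) : Prop :=
  FatOpen U ∧ IsNCFunctionOn U f ∧
    ∀ a ∈ U, ∃ ε : ℝ, 0 < ε ∧ FBall a ε ⊆ U ∧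
      ∃ C : ℝ, ∀ x ∈ FBall a ε, ‖f x.1 x.2‖ ≤ C

/-- The Hessian `Hf(a)[h,k]`: the derivative in direction `k` of `x ↦ Df(x)[h]`. -/
def ncHess {d n : ℕ} (f : ∀ m, MatTup d m → Mat m) (a h k : MatTup d n) : Mat n :=
  fderiv ℂ (fun x : MatTup d n => fderiv ℂ (f n) x h) a k

/-- Join a `(d-k)`-tuple and a `k`-tuple into a `d`-tuple. -/
def joinTup {d k : ℕ} (hk : k ≤ d) {n : ℕ} (y : Fin (d - k) → Mat n) (z : Fin k → Mat n) :
    Fin d → Mat n :=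
  fun j => if hj : (j : ℕ) < d - k then y ⟨j, hj⟩
    else z ⟨(j : ℕ) - (d - k), by have := j.isLt; omega⟩

/-- A tuple `a` is broad if every matrix is a polynomial in `a`. -/
def Broad {d n : ℕ} (a : MatTup d n) : Prop :=
  ∀ M : Mat n, ∃ p : FreePoly d, polyEval p a = M

/-- The ampliation `id_k ⊗ L` of a map `L : M_n^d → M_n`, acting blockwise on
`M_{kn}^d` (identifying `M_{kn}` with `k × k` block matrices over `M_n`). -/
def ampFun {d n : ℕ} (L : MatTup d n → Mat n) (k : ℕ) (H : MatTup d (k * n)) : Mat (k * n) :=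
  fun p q =>
    L (fun r s t => H r (finProdFinEquiv ((finProdFinEquiv.symm p).1, s))
        (finProdFinEquiv ((finProdFinEquiv.symm q).1, t)))
      (finProdFinEquiv.symm p).2 (finProdFinEquiv.symm q).2

/-- The set of operator norms of right inverses of the ampliation `L_k`. -/
def RightInvVals {d n : ℕ} (L : MatTup d n → Mat n) (k : ℕ) : Set ℝ :=
  {c | ∃ S : Mat (k * n) →L[ℂ] MatTup d (k * n), (∀ Y, ampFun L k (S Y) = Y) ∧ ‖S‖ = c}

/-- `L` is completely nonsingular: every ampliation has a right inverse, and
`sup_k inf {‖R‖ : R right inverse of L_k} < ∞`. -/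
def CompletelyNonsingular {d n : ℕ} (L : MatTup d n → Mat n) : Prop :=
  (∀ k : ℕ, 1 ≤ k → (RightInvVals L k).Nonempty) ∧
    BddAbove {c : ℝ | ∃ k : ℕ, 1 ≤ k ∧ c = sInf (RightInvVals L k)}

/-- `c(L) = (sup_k inf {‖R‖ : R right inverse of L_k})⁻¹`. -/
def cConst {d n : ℕ} (L : MatTup d n → Mat n) : ℝ :=
  (sSup {c : ℝ | ∃ k : ℕ, 1 ≤ k ∧ c = sInf (RightInvVals L k)})⁻¹

/-- Evaluation of a `J × J` matrix of free polynomials at `x ∈ M_n^d`, as an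
`Jn × Jn` matrix. -/
def matPolyEval {d J n : ℕ} (δ : Matrix (Fin J) (Fin J) (FreePoly d)) (x : MatTup d n) :
    Matrix (Fin (J * n)) (Fin (J * n)) ℂ :=
  fun p q => polyEval (δ (finProdFinEquiv.symm p).1 (finProdFinEquiv.symm q).1) x
    (finProdFinEquiv.symm p).2 (finProdFinEquiv.symm q).2

/-- The basic free open set `G_δ = {x : ‖δ(x)‖ < 1}`. -/
def GSet {d J : ℕ} (δ : Matrix (Fin J) (Fin J) (FreePoly d)) : Set (MSpace d) :=
  {x | ‖matPolyEval δ x.2‖ < 1}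

/-- The linear map `Γ ↦ aΓ - Γa` from `M_n` to `M_n^d`. -/
def commMap {d n : ℕ} (a : MatTup d n) : Mat n →ₗ[ℂ] MatTup d n where
  toFun := fun Γ => fun r => a r * Γ - Γ * a r
  map_add' := by
    intro Γ₁ Γ₂
    funext r
    simp only [Matrix.mul_add, Matrix.add_mul, Pi.add_apply]
    abel
  map_smul' := by
    intro c Γ
    funext r
    simp [Matrix.mul_smul, Matrix.smul_mul, smul_sub]

/-- The subspace `{aΓ - Γa : Γ ∈ M_n}` of `M_n^d`. -/
def commSubspace {d n : ℕ} (a : MatTup d n) : Submodule ℂ (MatTup d n) :=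
  LinearMap.range (commMap a)

end


/-!
Everything rests on one fact: a star-algebra homomorphism between C⋆-algebras is contractive.
Ampliation `M ↦ M^{(k)}`, conjugation by a unitary, the block-diagonal sum `(A, B) ↦ A ⊕ B`,
and the blockwise extension of any of these to `J × J` block matrices are star-algebra
homomorphisms of matrix algebras with the operator norm.

Hence `F(a,r)` lies in the ball of radius `‖a‖ + r`; it is closed under unitary conjugation by
construction, and under direct sums because `a^{(k₁)} ⊕ a^{(k₂)} = a^{(k₁+k₂)}`. For `G_δ`:
`‖δ(u* x u)‖ ≤ ‖δ(x)‖` and `‖δ(a^{(k)})‖ ≤ ‖δ(a)‖`, while on bounded sets `δ` is Lipschitz with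
a constant independent of the matrix size, so `‖δ(a)‖ < 1` propagates to a whole fat ball around
`a`. Finally `a ∈ F(a,r)`, so fat open sets are fine open.
-/

namespace Matrix

variable {R A B : Type*} [CommSemiring R] [Semiring A] [StarRing A] [Algebra R A]
  [Semiring B] [StarRing B] [Algebra R B]
  {l m : Type*} [Fintype l] [Fintype m] [DecidableEq l] [DecidableEq m]

variable (R A) in
def reindexStarAlgEquiv (e : l ≃ m) : Matrix l l A ≃⋆ₐ[R] Matrix m m A :=
  StarAlgEquiv.ofAlgEquiv (reindexAlgEquiv R A e) fun _ => rfl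

variable (R A l m) in
def compStarAlgEquiv : Matrix l l (Matrix m m A) ≃⋆ₐ[R] Matrix (l × m) (l × m) A :=
  StarAlgEquiv.ofAlgEquiv (compAlgEquiv l m A R) fun _ => rfl

variable (R A m) in
def scalarStarAlgHom : A →⋆ₐ[R] Matrix m m A :=
  { scalarAlgHom m R with map_star' := fun _ => (diagonal_conjTranspose _).symm }

variable (R A l m) in
def fromBlocksStarAlgHom : Matrix l l A × Matrix m m A →⋆ₐ[R] Matrix (l ⊕ m) (l ⊕ m) A where
  toFun M := fromBlocks M.1 0 0 M.2
  map_one' := fromBlocks_one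
  map_mul' M N := by simp [fromBlocks_multiply]
  map_zero' := by simp
  map_add' M N := by simp [fromBlocks_add]
  commutes' c := by simp [algebraMap_eq_diagonal, fromBlocks_diagonal]
  map_star' M := by simp [star_eq_conjTranspose, fromBlocks_conjTranspose]

def _root_.StarAlgHom.mapMatrix (φ : A →⋆ₐ[R] B) : Matrix m m A →⋆ₐ[R] Matrix m m B :=
  { φ.toAlgHom.mapMatrix with map_star' := fun _ => conjTranspose_map φ (map_star φ) }

@[simp] lemma _root_.StarAlgHom.mapMatrix_apply (φ : A →⋆ₐ[R] B) (M : Matrix m m A) :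
    φ.mapMatrix M = M.map φ := rfl

end Matrix

lemma Matrix.single_eq_single_one_mul_scalar {m A : Type*} [Fintype m] [DecidableEq m]
    [Semiring A] (i j : m) (a : A) :
    Matrix.single i j a = Matrix.single i j 1 * Matrix.scalar m a := by
  ext k l
  simp [Matrix.single_apply]

lemma pi_norm_map_le {ι E F : Type*} [Fintype ι] [SeminormedAddCommGroup E]
    [SeminormedAddCommGroup F] {f : E → F} (hf : ∀ e, ‖f e‖ ≤ ‖e‖) (x : ι → E) :
    ‖fun i => f (x i)‖ ≤ ‖x‖ :=
  (pi_norm_le_iff_of_nonneg (norm_nonneg x)).2 fun i => (hf _).trans (norm_le_pi_norm x i)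

def blockStarAlgEquiv (J n : ℕ) : Matrix (Fin J) (Fin J) (Mat n) ≃⋆ₐ[ℂ] Mat (J * n) :=
  (Matrix.compStarAlgEquiv ℂ ℂ (Fin J) (Fin n)).trans
    (Matrix.reindexStarAlgEquiv ℂ ℂ finProdFinEquiv)

def ampStarAlgHom (k n : ℕ) : Mat n →⋆ₐ[ℂ] Mat (k * n) :=
  (blockStarAlgEquiv k n).toStarAlgHom.comp (Matrix.scalarStarAlgHom ℂ (Mat n) (Fin k))

def blockMap (J : ℕ) {n m : ℕ} (φ : Mat n →⋆ₐ[ℂ] Mat m) : Mat (J * n) →⋆ₐ[ℂ] Mat (J * m) :=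
  ((blockStarAlgEquiv J m).toStarAlgHom.comp φ.mapMatrix).comp
    (blockStarAlgEquiv J n).symm.toStarAlgHom

lemma blockMap_apply (J : ℕ) {n m : ℕ} (φ : Mat n →⋆ₐ[ℂ] Mat m) (M : Mat (J * n)) :
    blockMap J φ M = blockStarAlgEquiv J m (((blockStarAlgEquiv J n).symm M).map φ) := rfl

def blkStarAlgHom (n m : ℕ) : Mat n × Mat m →⋆ₐ[ℂ] Mat (n + m) :=
  (Matrix.reindexStarAlgEquiv ℂ ℂ finSumFinEquiv).toStarAlgHom.comp
    (Matrix.fromBlocksStarAlgHom ℂ ℂ (Fin n) (Fin m))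

def blkUnitary {n m : ℕ} (u : unitaryGroup (Fin n) ℂ) (v : unitaryGroup (Fin m) ℂ) :
    unitaryGroup (Fin (n + m)) ℂ :=
  ⟨blkStarAlgHom n m (u, v), Unitary.map_mem _ (by
    simp [Unitary.mem_iff, Prod.ext_iff, Unitary.star_mul_self_of_mem u.2,
      Unitary.mul_star_self_of_mem u.2, Unitary.star_mul_self_of_mem v.2,
      Unitary.mul_star_self_of_mem v.2])⟩

section Polynomials

variable {d J : ℕ}

lemma polyEval_map {n m : ℕ} {F : Type*} [FunLike F (Mat n) (Mat m)]
    [AlgHomClass F ℂ (Mat n) (Mat m)] (φ : F) (p : FreePoly d) (x : MatTup d n) :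
    polyEval p (fun r => φ (x r)) = φ (polyEval p x) := by
  rw [polyEval, polyEval, ← AlgHom.coe_coe φ, ← AlgHom.comp_apply]
  congr 1
  ext
  simp

lemma matPolyEval_eq_blockStarAlgEquiv {n : ℕ} (δ : Matrix (Fin J) (Fin J) (FreePoly d))
    (x : MatTup d n) :
    matPolyEval δ x = blockStarAlgEquiv J n (δ.map fun p => polyEval p x) := rfl

lemma matPolyEval_map {n m : ℕ} (δ : Matrix (Fin J) (Fin J) (FreePoly d))
    (φ : Mat n →⋆ₐ[ℂ] Mat m) (x : MatTup d n) :
    matPolyEval δ (fun r => φ (x r)) = blockMap J φ (matPolyEval δ x) := by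
  rw [matPolyEval_eq_blockStarAlgEquiv, matPolyEval_eq_blockStarAlgEquiv, blockMap_apply,
    StarAlgEquiv.symm_apply_apply, Matrix.map_map]
  simp only [Function.comp_def, polyEval_map]

lemma norm_matPolyEval_map_le {n m : ℕ} (δ : Matrix (Fin J) (Fin J) (FreePoly d))
    (φ : Mat n →⋆ₐ[ℂ] Mat m) (x : MatTup d n) :
    ‖matPolyEval δ (fun r => φ (x r))‖ ≤ ‖matPolyEval δ x‖ := by
  rw [matPolyEval_map]
  exact NonUnitalStarAlgHom.norm_apply_le _ _

lemma exists_norm_polyEval_le (p : FreePoly d) (R : ℝ) :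
    ∃ B ≥ 0, ∀ (n : ℕ) (x : MatTup d n), ‖x‖ ≤ R → ‖polyEval p x‖ ≤ B := by
  induction p using FreeAlgebra.induction with
  | grade0 c =>
    refine ⟨‖c‖, norm_nonneg c, fun n x _ => ?_⟩
    simpa [polyEval] using NonUnitalStarAlgHom.norm_apply_le (StarAlgHom.ofId ℂ (Mat n)) c
  | grade1 i =>
    refine ⟨max R 0, le_max_right _ _, fun n x hx => ?_⟩
    rw [polyEval, FreeAlgebra.lift_ι_apply]
    exact (norm_le_pi_norm x i).trans (hx.trans (le_max_left _ _))
  | mul p q hp hq =>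
    obtain ⟨B₁, hB₁, hp⟩ := hp
    obtain ⟨B₂, hB₂, hq⟩ := hq
    refine ⟨B₁ * B₂, by positivity, fun n x hx => ?_⟩
    simpa [polyEval] using
      (norm_mul_le _ _).trans (mul_le_mul (hp n x hx) (hq n x hx) (norm_nonneg _) hB₁)
  | add p q hp hq =>
    obtain ⟨B₁, hB₁, hp⟩ := hp
    obtain ⟨B₂, hB₂, hq⟩ := hq
    refine ⟨B₁ + B₂, by positivity, fun n x hx => ?_⟩
    simpa [polyEval] using (norm_add_le _ _).trans (add_le_add (hp n x hx) (hq n x hx))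

lemma exists_lipschitz_polyEval (p : FreePoly d) (R : ℝ) :
    ∃ C ≥ 0, ∀ (n : ℕ) (x y : MatTup d n), ‖x‖ ≤ R → ‖y‖ ≤ R →
      ‖polyEval p x - polyEval p y‖ ≤ C * ‖x - y‖ := by
  induction p using FreeAlgebra.induction with
  | grade0 c => exact ⟨0, le_rfl, fun n x y _ _ => by simp [polyEval]⟩
  | grade1 i =>
    refine ⟨1, zero_le_one, fun n x y _ _ => ?_⟩
    simpa [polyEval] using norm_le_pi_norm (x - y) i
  | mul p q hp hq =>
    obtain ⟨C₁, hC₁, hp⟩ := hp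
    obtain ⟨C₂, hC₂, hq⟩ := hq
    obtain ⟨B₁, hB₁, hpB⟩ := exists_norm_polyEval_le p R
    obtain ⟨B₂, hB₂, hqB⟩ := exists_norm_polyEval_le q R
    refine ⟨B₁ * C₂ + C₁ * B₂, by positivity, fun n x y hx hy => ?_⟩
    have hsplit : polyEval (p * q) x - polyEval (p * q) y =
        polyEval p x * (polyEval q x - polyEval q y) +
          (polyEval p x - polyEval p y) * polyEval q y := by
      simp only [polyEval, map_mul, mul_sub, sub_mul]
      abel
    calc ‖polyEval (p * q) x - polyEval (p * q) y‖
        ≤ ‖polyEval p x‖ * ‖polyEval q x - polyEval q y‖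
          + ‖polyEval p x - polyEval p y‖ * ‖polyEval q y‖ := by
          rw [hsplit]
          exact (norm_add_le _ _).trans (add_le_add (norm_mul_le _ _) (norm_mul_le _ _))
      _ ≤ B₁ * (C₂ * ‖x - y‖) + C₁ * ‖x - y‖ * B₂ := by
          gcongr
          exacts [hpB n x hx, hq n x y hx hy, hp n x y hx hy, hqB n y hy]
      _ = (B₁ * C₂ + C₁ * B₂) * ‖x - y‖ := by ring
  | add p q hp hq =>
    obtain ⟨C₁, hC₁, hp⟩ := hp
    obtain ⟨C₂, hC₂, hq⟩ := hq
    refine ⟨C₁ + C₂, by positivity, fun n x y hx hy => ?_⟩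
    have hsplit : polyEval (p + q) x - polyEval (p + q) y =
        (polyEval p x - polyEval p y) + (polyEval q x - polyEval q y) := by
      simp only [polyEval, map_add]
      abel
    rw [hsplit, add_mul]
    exact (norm_add_le _ _).trans (add_le_add (hp n x y hx hy) (hq n x y hx hy))

/-- The bound does not depend on `n`: `E_{ij} ⊗ M = (E_{ij} ⊗ 1)(1 ⊗ M)`, and both factors are
images of star-algebra homomorphisms. -/
lemma norm_blockStarAlgEquiv_single_le {n : ℕ} (i j : Fin J) (M : Mat n) :
    ‖blockStarAlgEquiv J n (Matrix.single i j M)‖ ≤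
      ‖(Matrix.single i j 1 : Matrix (Fin J) (Fin J) ℂ)‖ * ‖M‖ := by
  have hunit : Matrix.single i j (1 : Mat n) =
      (StarAlgHom.ofId ℂ (Mat n)).mapMatrix (Matrix.single i j 1) := by
    ext k l : 1
    simp [Matrix.single_apply]
  rw [Matrix.single_eq_single_one_mul_scalar, map_mul, hunit]
  refine (norm_mul_le _ _).trans (mul_le_mul ?_ ?_ (norm_nonneg _) (norm_nonneg _))
  · exact NonUnitalStarAlgHom.norm_apply_le
      ((blockStarAlgEquiv J n).toStarAlgHom.comp (StarAlgHom.ofId ℂ (Mat n)).mapMatrix) _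
  · exact NonUnitalStarAlgHom.norm_apply_le (ampStarAlgHom J n) M

lemma exists_lipschitz_matPolyEval (δ : Matrix (Fin J) (Fin J) (FreePoly d)) (R : ℝ) :
    ∃ C ≥ 0, ∀ (n : ℕ) (x y : MatTup d n), ‖x‖ ≤ R → ‖y‖ ≤ R →
      ‖matPolyEval δ x - matPolyEval δ y‖ ≤ C * ‖x - y‖ := by
  choose C hC₀ hC using fun i j => exists_lipschitz_polyEval (δ i j) R
  refine ⟨∑ i, ∑ j, ‖(Matrix.single i j 1 : Matrix (Fin J) (Fin J) ℂ)‖ * C i j,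
    Finset.sum_nonneg fun i _ => Finset.sum_nonneg fun j _ =>
      mul_nonneg (norm_nonneg _) (hC₀ i j),
    fun n x y hx hy => ?_⟩
  rw [matPolyEval_eq_blockStarAlgEquiv, matPolyEval_eq_blockStarAlgEquiv, ← map_sub,
    Matrix.matrix_eq_sum_single (_ - _)]
  simp only [map_sum, Finset.sum_mul]
  refine (norm_sum_le _ _).trans <| Finset.sum_le_sum fun i _ =>
    (norm_sum_le _ _).trans <| Finset.sum_le_sum fun j _ => ?_
  calc _ ≤ ‖(Matrix.single i j 1 : Matrix (Fin J) (Fin J) ℂ)‖ *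
        ‖polyEval (δ i j) x - polyEval (δ i j) y‖ := norm_blockStarAlgEquiv_single_le i j _
    _ ≤ ‖(Matrix.single i j 1 : Matrix (Fin J) (Fin J) ℂ)‖ * (C i j * ‖x - y‖) := by
        gcongr
        exact hC i j n x y hx hy
    _ = _ := by ring

end Polynomials

section Conjugation

variable {d n m : ℕ}

lemma simConj_simConj (s t : Mat n) (x : MatTup d n) :
    simConj s (simConj t x) = simConj (t * s) x := by
  funext r
  simp [simConj, Matrix.mul_inv_rev, Matrix.mul_assoc]

lemma simConj_one (x : MatTup d n) : simConj 1 x = x := by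
  funext r
  simp [simConj]

lemma simConj_unitary (u : unitaryGroup (Fin n) ℂ) (x : MatTup d n) :
    simConj (u : Mat n) x = fun r => star (u : Mat n) * x r * u := by
  funext r
  rw [simConj, Matrix.inv_eq_left_inv (UnitaryGroup.star_mul_self u)]

lemma simConj_unitary_eq_conjStarAlgAut (u : unitaryGroup (Fin n) ℂ) (x : MatTup d n) :
    simConj (u : Mat n) x = fun r => Unitary.conjStarAlgAut ℂ (Mat n) (star u) (x r) := by
  simp [simConj_unitary]

lemma simConj_star_simConj (u : unitaryGroup (Fin n) ℂ) (x : MatTup d n) :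
    simConj (star u : Mat n) (simConj (u : Mat n) x) = x := by
  rw [simConj_simConj, Unitary.mul_star_self_of_mem u.2, simConj_one]

lemma simConj_simConj_star (u : unitaryGroup (Fin n) ℂ) (x : MatTup d n) :
    simConj (u : Mat n) (simConj (star u : Mat n) x) = x := by
  rw [simConj_simConj, Unitary.star_mul_self_of_mem u.2, simConj_one]

lemma continuous_simConj (s : Mat n) : Continuous (simConj (d := d) s) :=
  continuous_pi fun r => (continuous_const.mul (continuous_apply r)).mul continuous_const

lemma norm_simConj_unitary_le (u : unitaryGroup (Fin n) ℂ) (x : MatTup d n) :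
    ‖simConj (u : Mat n) x‖ ≤ ‖x‖ := by
  rw [simConj_unitary_eq_conjStarAlgAut]
  exact pi_norm_map_le (NonUnitalStarAlgHom.norm_apply_le _) x

lemma dSum_apply (x : MatTup d n) (y : MatTup d m) (r : Fin d) :
    dSum x y r = blkStarAlgHom n m (x r, y r) := rfl

lemma dSum_simConj (u : unitaryGroup (Fin n) ℂ) (v : unitaryGroup (Fin m) ℂ)
    (x : MatTup d n) (y : MatTup d m) :
    dSum (simConj (u : Mat n) x) (simConj (v : Mat m) y) =
      simConj (blkUnitary u v : Mat (n + m)) (dSum x y) := by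
  rw [simConj_unitary, simConj_unitary, simConj_unitary]
  funext r
  simp only [dSum_apply, blkUnitary, ← map_star, ← map_mul]
  rfl

lemma dSum_sub (x x' : MatTup d n) (y y' : MatTup d m) :
    dSum x y - dSum x' y' = dSum (x - x') (y - y') := by
  funext r
  simp only [Pi.sub_apply, dSum_apply, ← map_sub]
  rfl

lemma norm_dSum_le (x : MatTup d n) (y : MatTup d m) : ‖dSum x y‖ ≤ max ‖x‖ ‖y‖ :=
  (pi_norm_le_iff_of_nonneg (le_max_of_le_left (norm_nonneg x))).2 fun r =>
    (NonUnitalStarAlgHom.norm_apply_le (blkStarAlgHom n m) (x r, y r)).trans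
      (max_le_max (norm_le_pi_norm x r) (norm_le_pi_norm y r))

end Conjugation

section Ampliation

variable {d n : ℕ}

lemma ampTup_eq (k : ℕ) (a : MatTup d n) : ampTup k a = fun r => ampStarAlgHom k n (a r) := by
  funext r
  ext p q
  change _ = reindex finProdFinEquiv finProdFinEquiv (Matrix.comp _ _ _ _ _ (scalar _ (a r))) p q
  simp only [ampTup, reindex_apply, Matrix.submatrix_apply, Matrix.kroneckerMap_apply,
    Matrix.one_apply, ite_mul, one_mul, zero_mul, Matrix.scalar_apply, Matrix.comp_apply,
    Matrix.diagonal_apply]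
  split_ifs <;> rfl

lemma norm_ampTup_le (k : ℕ) (a : MatTup d n) : ‖ampTup k a‖ ≤ ‖a‖ := by
  rw [ampTup_eq]
  exact pi_norm_map_le (NonUnitalStarAlgHom.norm_apply_le _) a

lemma ampTup_finProdFinEquiv (k : ℕ) (a : MatTup d n) (r : Fin d) (i j : Fin k) (s t : Fin n) :
    ampTup k a r (finProdFinEquiv (i, s)) (finProdFinEquiv (j, t)) =
      if i = j then a r s t else 0 := by
  simp [ampTup, Matrix.one_apply]

lemma finCongr_add_mul_castAdd (k₁ k₂ : ℕ) (i : Fin k₁) (s : Fin n) :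
    finCongr (add_mul k₁ k₂ n) (finProdFinEquiv (Fin.castAdd k₂ i, s)) =
      Fin.castAdd (k₂ * n) (finProdFinEquiv (i, s)) := by
  ext
  simp [finProdFinEquiv]

lemma finCongr_add_mul_natAdd (k₁ k₂ : ℕ) (i : Fin k₂) (s : Fin n) :
    finCongr (add_mul k₁ k₂ n) (finProdFinEquiv (Fin.natAdd k₁ i, s)) =
      Fin.natAdd (k₁ * n) (finProdFinEquiv (i, s)) := by
  ext
  simp [finProdFinEquiv]
  ring

/-- Since `finProdFinEquiv (i, s) = i n + s`, splitting the block index `i` at `k₁` splits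
the matrix index at `k₁ n`: no permutation is needed, only a cast. -/
lemma ampTup_add (k₁ k₂ : ℕ) (a : MatTup d n) :
    ampTup (k₁ + k₂) a = fun r => reindex (finCongr (add_mul k₁ k₂ n).symm)
      (finCongr (add_mul k₁ k₂ n).symm) (dSum (ampTup k₁ a) (ampTup k₂ a) r) := by
  funext r
  ext p q
  obtain ⟨⟨i, s⟩, rfl⟩ := finProdFinEquiv.surjective p
  obtain ⟨⟨j, t⟩, rfl⟩ := finProdFinEquiv.surjective q
  induction i using Fin.addCases <;> induction j using Fin.addCases <;>
    simp [dSum, blk, reindex_apply, finCongr_add_mul_castAdd, finCongr_add_mul_natAdd,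
      ampTup_finProdFinEquiv, -finCongr_apply, Fin.ext_iff] <;> omega

lemma reindex_ampTup_one (a : MatTup d n) :
    (fun r => reindex (finCongr (one_mul n)) (finCongr (one_mul n)) (ampTup 1 a r)) = a := by
  funext r
  ext s t
  have hs : ∀ s : Fin n, finCongr (one_mul n).symm s = finProdFinEquiv (0, s) := fun s => by
    ext
    simp [finProdFinEquiv]
  simp [reindex_apply, -finCongr_apply, hs, ampTup_finProdFinEquiv]

end Ampliation

section FBall

variable {d n : ℕ}

lemma sigma_mk_reindex_finCongr {N M : ℕ} (h : N = M) (x : MatTup d N) :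
    (⟨M, fun r => reindex (finCongr h) (finCongr h) (x r)⟩ : MSpace d) = ⟨N, x⟩ := by
  subst h
  rfl

lemma mem_FBall_of_norm_sub_lt {a : MatTup d n} {r : ℝ} {k : ℕ} (hk : 1 ≤ k)
    {x : MatTup d (k * n)} (hx : ‖x - ampTup k a‖ < r) :
    (⟨k * n, x⟩ : MSpace d) ∈ FBall ⟨n, a⟩ r :=
  ⟨k, hk, x, hx, 1, by simp [simConj_one]⟩

lemma self_mem_FBall (a : MatTup d n) {r : ℝ} (hr : 0 < r) :
    (⟨n, a⟩ : MSpace d) ∈ FBall ⟨n, a⟩ r := by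
  have h := mem_FBall_of_norm_sub_lt (a := a) le_rfl (x := ampTup 1 a) (by simpa using hr)
  rwa [← sigma_mk_reindex_finCongr (one_mul n), reindex_ampTup_one] at h

lemma simConj_mem_FBall {b : MSpace d} {r : ℝ} {m : ℕ} (u : unitaryGroup (Fin m) ℂ)
    {x : MatTup d m} (hx : (⟨m, x⟩ : MSpace d) ∈ FBall b r) :
    (⟨m, simConj (u : Mat m) x⟩ : MSpace d) ∈ FBall b r := by
  obtain ⟨k, hk, x', hx', u', h⟩ := hx
  cases h
  exact ⟨k, hk, x', hx', u' * u, by rw [simConj_simConj]; rfl⟩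

lemma isOpen_FBall_slice (a : MatTup d n) (r : ℝ) (m : ℕ) :
    IsOpen {x : MatTup d m | (⟨m, x⟩ : MSpace d) ∈ FBall ⟨n, a⟩ r} := by
  refine isOpen_iff_forall_mem_open.2 fun z hz => ?_
  obtain ⟨k, hk, x, hx, u, h⟩ := hz
  cases h
  refine ⟨{w | ‖simConj (star u : Mat (k * n)) w - ampTup k a‖ < r}, fun w hw => ?_,
    isOpen_lt ((continuous_simConj _).sub continuous_const).norm continuous_const, ?_⟩
  · rw [← simConj_simConj_star u w]
    exact simConj_mem_FBall u (mem_FBall_of_norm_sub_lt hk hw)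
  · simpa [simConj_star_simConj] using hx

lemma dSum_mem_FBall {a : MatTup d n} {r : ℝ} {m₁ m₂ : ℕ} {x : MatTup d m₁} {y : MatTup d m₂}
    (hx : (⟨m₁, x⟩ : MSpace d) ∈ FBall ⟨n, a⟩ r) (hy : (⟨m₂, y⟩ : MSpace d) ∈ FBall ⟨n, a⟩ r) :
    (⟨m₁ + m₂, dSum x y⟩ : MSpace d) ∈ FBall ⟨n, a⟩ r := by
  obtain ⟨k₁, hk₁, x, hx, u₁, h⟩ := hx
  cases h
  obtain ⟨k₂, hk₂, y, hy, u₂, h⟩ := hy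
  cases h
  rw [dSum_simConj]
  refine simConj_mem_FBall _ ?_
  have hk : k₁ * n + k₂ * n = (k₁ + k₂) * n := (add_mul k₁ k₂ n).symm
  rw [← sigma_mk_reindex_finCongr hk]
  refine mem_FBall_of_norm_sub_lt (by omega) ?_
  calc _ = ‖fun i => Matrix.reindexStarAlgEquiv ℂ ℂ (finCongr hk)
          ((dSum x y - dSum (ampTup k₁ a) (ampTup k₂ a)) i)‖ := by
        rw [ampTup_add]
        rfl
    _ ≤ ‖dSum (x - ampTup k₁ a) (y - ampTup k₂ a)‖ := by
        rw [← dSum_sub]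
        exact pi_norm_map_le (NonUnitalStarAlgHom.norm_apply_le _) _
    _ ≤ max ‖x - ampTup k₁ a‖ ‖y - ampTup k₂ a‖ := norm_dSum_le _ _
    _ < r := max_lt hx hy

theorem isNCDomain_FBall (a : MatTup d n) (r : ℝ) : IsNCDomain (FBall ⟨n, a⟩ r) where
  duOpen := isOpen_FBall_slice a r
  dsum_mem _ _ := dSum_mem_FBall
  unitary_mem u _ := simConj_mem_FBall u

lemma norm_le_of_mem_FBall {a : MatTup d n} {r : ℝ} {y : MSpace d}
    (hy : y ∈ FBall ⟨n, a⟩ r) : ‖y.2‖ ≤ ‖a‖ + r := by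
  obtain ⟨k, -, x, hx, u, rfl⟩ := hy
  calc ‖simConj (u : Mat (k * n)) x‖ ≤ ‖x‖ := norm_simConj_unitary_le u x
    _ ≤ ‖ampTup k a‖ + ‖x - ampTup k a‖ := norm_le_insert' _ _
    _ ≤ ‖a‖ + r := add_le_add (norm_ampTup_le k a) hx.le

end FBall

lemma FatOpen.fineOpen {d : ℕ} {U : Set (MSpace d)} (hU : FatOpen U) : FineOpen U := by
  rintro ⟨n, a⟩ ha
  obtain ⟨ε, hε, hsub⟩ := hU _ ha
  exact ⟨_, isNCDomain_FBall a ε, self_mem_FBall a hε, hsub⟩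

section FreeTopology

variable {d J n : ℕ}

lemma norm_matPolyEval_ampTup_le (δ : Matrix (Fin J) (Fin J) (FreePoly d)) (k : ℕ)
    (a : MatTup d n) : ‖matPolyEval δ (ampTup k a)‖ ≤ ‖matPolyEval δ a‖ := by
  rw [ampTup_eq]
  exact norm_matPolyEval_map_le δ _ a

lemma norm_matPolyEval_simConj_le (δ : Matrix (Fin J) (Fin J) (FreePoly d))
    (u : unitaryGroup (Fin n) ℂ) (x : MatTup d n) :
    ‖matPolyEval δ (simConj (u : Mat n) x)‖ ≤ ‖matPolyEval δ x‖ := by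
  rw [simConj_unitary_eq_conjStarAlgAut]
  exact norm_matPolyEval_map_le δ (Unitary.conjStarAlgAut ℂ (Mat n) (star u)).toStarAlgHom x

theorem exists_FBall_subset_GSet (δ : Matrix (Fin J) (Fin J) (FreePoly d)) {x : MSpace d}
    (hx : x ∈ GSet δ) : ∃ ε : ℝ, 0 < ε ∧ FBall x ε ⊆ GSet δ := by
  obtain ⟨n, a⟩ := x
  set D := ‖matPolyEval δ a‖
  have hD : D < 1 := hx
  obtain ⟨C, hC₀, hC⟩ := exists_lipschitz_matPolyEval δ (‖a‖ + 1)
  set ε := min 1 ((1 - D) / (C + 1))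
  have hε : 0 < ε := lt_min one_pos (div_pos (by linarith) (by linarith))
  have hCε : C * ε < 1 - D :=
    calc C * ε < (C + 1) * ε := by linarith
      _ ≤ (C + 1) * ((1 - D) / (C + 1)) := by gcongr; exact min_le_right _ _
      _ = 1 - D := by field_simp
  refine ⟨ε, hε, ?_⟩
  rintro _ ⟨k, -, x, hx, u, rfl⟩
  have hamp : ‖ampTup k a‖ ≤ ‖a‖ + 1 := (norm_ampTup_le k a).trans (by linarith)
  have hxR : ‖x‖ ≤ ‖a‖ + 1 :=
    calc ‖x‖ ≤ ‖ampTup k a‖ + ‖x - ampTup k a‖ := norm_le_insert' _ _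
      _ ≤ ‖a‖ + 1 := add_le_add (norm_ampTup_le k a) (hx.le.trans (min_le_left _ _))
  calc ‖matPolyEval δ (simConj (u : Mat (k * n)) x)‖
      ≤ ‖matPolyEval δ (ampTup k a)‖ + ‖matPolyEval δ x - matPolyEval δ (ampTup k a)‖ :=
        (norm_matPolyEval_simConj_le δ u x).trans (norm_le_insert' _ _)
    _ ≤ D + C * ε := add_le_add (norm_matPolyEval_ampTup_le δ k a)
        ((hC _ x _ hxR hamp).trans (by gcongr))
    _ < 1 := by linarith

end FreeTopology

theorem fat_topology_admissible_general (d : ℕ) :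
    (∀ (n : ℕ) (a : MatTup d n) (r : ℝ), 0 < r →
      IsNCDomain (FBall (⟨n, a⟩ : MSpace d) r) ∧
        ∃ B : ℝ, ∀ y ∈ FBall (⟨n, a⟩ : MSpace d) r, ‖y.2‖ ≤ B) ∧
    (∀ (J : ℕ) (δ : Matrix (Fin J) (Fin J) (FreePoly d)) (x : MSpace d),
      x ∈ GSet δ → ∃ ε : ℝ, 0 < ε ∧ FBall x ε ⊆ GSet δ) ∧
    (∀ U : Set (MSpace d), FatOpen U → FineOpen U) :=
  ⟨fun _ a r _ => ⟨isNCDomain_FBall a r, _, fun _ => norm_le_of_mem_FBall⟩,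
    fun _ δ _ => exists_FBall_subset_GSet δ, fun _ => FatOpen.fineOpen⟩

/-- The fat topology is admissible: each `F(a,r)` is a bounded nc domain; it is finer
than the free topology (every point of a basic free set `G_δ` has a fat neighborhood
inside it) and coarser than the fine topology (every fat open set is fine open). -/
theorem fat_topology_admissible (d : ℕ) (hd : 1 ≤ d) :
    (∀ (n : ℕ) (a : MatTup d n) (r : ℝ), 0 < r →
      IsNCDomain (FBall (⟨n, a⟩ : MSpace d) r) ∧
        ∃ B : ℝ, ∀ y ∈ FBall (⟨n, a⟩ : MSpace d) r, ‖y.2‖ ≤ B) ∧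
    (∀ (J : ℕ) (δ : Matrix (Fin J) (Fin J) (FreePoly d)) (x : MSpace d),
      x ∈ GSet δ → ∃ ε : ℝ, 0 < ε ∧ FBall x ε ⊆ GSet δ) ∧
    (∀ U : Set (MSpace d), FatOpen U → FineOpen U) :=
  fat_topology_admissible_general d
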